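/- arXiv:2403.04923 — 2 statements merged into one kernel-verified Lean document; each statement's English description precedes it below -/
import Mathlib

section
/- Let G = (V,E) be a finite simple connected graph with nonempty leader set V_ℓ, and let V_D be the set of vertices whose distance-to-leader vectors form a longest pseudo-monotonically increasing sequence in G. Let G' = (V,E') be a connected graph obtained from G by deleting k edges of E and adding k edges not in E (so |E'| = |E|), such that d_{G'}(ℓ, v) = d_G(ℓ, v) for every leader ℓ ∈ V_ℓ and every v ∈ V_D. Then δ(G, V_ℓ) ≤ δ(G', V_ℓ). -/
/-- The sequence of distance-to-leader vectors of the vertices `u 0, …, u (k-1)` is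
pseudo-monotonically increasing (PMI): for every index `i` there is a coordinate `p`
with `[D_{u i}]_p < [D_{u j}]_p` for all `j > i`. -/
def IsPMI {V : Type*} {m k : ℕ} (G : SimpleGraph V) (ℓ : Fin m → V) (u : Fin k → V) : Prop :=
  ∀ i : Fin k, ∃ p : Fin m, ∀ j : Fin k, i < j → G.dist (ℓ p) (u i) < G.dist (ℓ p) (u j)

/-- `deltaPMI G ℓ` is the maximum length of a PMI sequence of distance-to-leader
vectors in `G` with leaders `ℓ 0, …, ℓ (m-1)`. -/
noncomputable def deltaPMI {V : Type*} {m : ℕ} (G : SimpleGraph V) (ℓ : Fin m → V) : ℕ :=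
  sSup {k : ℕ | ∃ u : Fin k → V, IsPMI G ℓ u}

/-- edge substitution. Let `G` be a finite simple connected graph with
nonempty leader set, and let `u 0, …` be vertices whose distance-to-leader vectors form a
longest PMI sequence in `G` (its length is `δ(G, V_ℓ) = deltaPMI G ℓ`). Let `G'` be a
connected graph obtained from `G` by deleting a set `D` of `k` edges of `G` and adding a
set `F` of `k` edges not in `G` (so `|E'| = |E|`), such that every leader-to-`u i`
distance in `G'` equals the corresponding distance in `G`. Then
`δ(G, V_ℓ) ≤ δ(G', V_ℓ)`. -/
theorem deltaPMI_le_of_edge_substitution {V : Type*} [Fintype V] [DecidableEq V]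
    (G G' : SimpleGraph V) [DecidableRel G.Adj] [DecidableRel G'.Adj]
    (hG : G.Connected) (hG' : G'.Connected)
    (k : ℕ) (D F : Finset (Sym2 V))
    (hD : D ⊆ G.edgeFinset) (hDcard : D.card = k)
    (hF : Disjoint F G.edgeFinset) (hFcard : F.card = k)
    (hE' : G'.edgeFinset = (G.edgeFinset \ D) ∪ F)
    {m : ℕ} (hm : 0 < m) (ℓ : Fin m → V)
    (u : Fin (deltaPMI G ℓ) → V) (hu : IsPMI G ℓ u)
    (hdist : ∀ (j : Fin m) (i : Fin (deltaPMI G ℓ)),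
      G'.dist (ℓ j) (u i) = G.dist (ℓ j) (u i)) :
    deltaPMI G ℓ ≤ deltaPMI G' ℓ := by
  have hmem : deltaPMI G ℓ ∈ {k : ℕ | ∃ u : Fin k → V, IsPMI G' ℓ u} := by
    refine ⟨u, fun i => ?_⟩
    obtain ⟨p, hp⟩ := hu i
    exact ⟨p, fun j hij => by rw [hdist p i, hdist p j]; exact hp j hij⟩
  refine le_csSup ⟨Fintype.card V, ?_⟩ hmem
  rintro n ⟨w, hw⟩
  have hinj : Function.Injective w := by
    intro i j hij
    by_contra hne
    rcases lt_or_gt_of_ne (fun h : i = j => hne h) with h | h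
    · obtain ⟨p, hp⟩ := hw i
      exact absurd (hp j h) (by rw [hij]; exact lt_irrefl _)
    · obtain ⟨p, hp⟩ := hw j
      exact absurd (hp i h) (by rw [hij]; exact lt_irrefl _)
  simpa using Fintype.card_le_of_injective w hinj
end

section
/- Let A be an n×n real matrix and B an n×m real matrix. For every t₁ > 0 and every continuous control u : [0,t₁] → ℝ^m, the state reached from the origin, x(t₁) = ∫_0^{t₁} exp(−(t₁−τ)A) (−B) u(τ) dτ, lies in the column space of the controllability matrix C = [−B, (−A)(−B), …, (−A)^{n−1}(−B)]; hence every state reachable from the origin in finite time belongs to the controllable subspace. -/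
open Matrix intervalIntegral

/-- The controllability matrix `[-B, (-A)(-B), …, (-A)^{n-1}(-B)]` of the system
`ẋ = -Ax - Bu`, with block `p` (for `p = 0, …, n-1`) equal to `(-A)^p (-B)`. -/
noncomputable def ctrbMatrix {n m : ℕ} (A : Matrix (Fin n) (Fin n) ℝ)
    (B : Matrix (Fin n) (Fin m) ℝ) : Matrix (Fin n) (Fin n × Fin m) ℝ :=
  Matrix.of fun i pj => ((-A) ^ (pj.1 : ℕ) * (-B)) i pj.2

/-- By Cayley–Hamilton, every power of an `n × n` matrix lies in the span of the
first `n` powers. -/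
lemma pow_mem_span_pow_fin {n : ℕ} (M : Matrix (Fin n) (Fin n) ℝ) (k : ℕ) :
    M ^ k ∈ Submodule.span ℝ (Set.range fun p : Fin n => M ^ (p : ℕ)) := by
  rcases Nat.eq_zero_or_pos n with hn | hn
  · subst hn
    have : M ^ k = 0 := by ext i j; exact i.elim0
    rw [this]; exact Submodule.zero_mem _
  · rw [Matrix.pow_eq_aeval_mod_charpoly]
    have hne : M.charpoly ≠ 1 := by
      intro h
      have := M.charpoly_natDegree_eq_dim
      rw [h, Polynomial.natDegree_one] at this
      simp [Fintype.card_fin] at this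
      omega
    have hdeg : (Polynomial.X ^ k %ₘ M.charpoly).natDegree < n := by
      have := Polynomial.natDegree_modByMonic_lt (Polynomial.X ^ k) M.charpoly_monic hne
      rwa [M.charpoly_natDegree_eq_dim, Fintype.card_fin] at this
    rw [Polynomial.aeval_eq_sum_range' hdeg]
    refine Submodule.sum_mem _ fun i hi => ?_
    exact Submodule.smul_mem _ _
      (Submodule.subset_span ⟨⟨i, Finset.mem_range.mp hi⟩, rfl⟩)

/-- For the system `ẋ = -Ax - Bu`, every `t₁ > 0` and every continuous
control `u : [0, t₁] → ℝᵐ`, the state reached from the origin,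
`x(t₁) = ∫_0^{t₁} exp(-(t₁ - τ)A) (-B) u(τ) dτ`, lies in the column space of the
controllability matrix `[-B, (-A)(-B), …, (-A)^{n-1}(-B)]`. -/
theorem reachable_state_mem_ctrb_range {n m : ℕ}
    (A : Matrix (Fin n) (Fin n) ℝ) (B : Matrix (Fin n) (Fin m) ℝ)
    (t₁ : ℝ) (ht₁ : 0 < t₁) (u : ℝ → Fin m → ℝ) (hu : ContinuousOn u (Set.Icc 0 t₁)) :
    (∫ τ in (0 : ℝ)..t₁,
        (NormedSpace.exp (-((t₁ - τ) • A))).mulVec ((-B).mulVec (u τ)))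
      ∈ LinearMap.range (ctrbMatrix A B).mulVecLin := by
  classical
  letI : SeminormedRing (Matrix (Fin n) (Fin n) ℝ) := Matrix.linftyOpSemiNormedRing
  letI : NormedRing (Matrix (Fin n) (Fin n) ℝ) := Matrix.linftyOpNormedRing
  letI : NormedAlgebra ℝ (Matrix (Fin n) (Fin n) ℝ) := Matrix.linftyOpNormedAlgebra
  set S : Submodule ℝ (Fin n → ℝ) := LinearMap.range (ctrbMatrix A B).mulVecLin with hSdef
  -- Step 1: columns of each block lie in `S`.
  have hcol : ∀ p : Fin n, ∀ v : Fin m → ℝ, ((-A) ^ (p : ℕ) * (-B)).mulVec v ∈ S := by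
    intro p v
    refine ⟨fun qj => if qj.1 = p then v qj.2 else 0, ?_⟩
    ext i
    simp only [Matrix.mulVecLin_apply, Matrix.mulVec, dotProduct, ctrbMatrix,
      Matrix.of_apply]
    rw [Fintype.sum_prod_type]
    rw [Finset.sum_eq_single p]
    · simp
    · intro q _ hq
      simp [hq]
    · intro h
      exact absurd (Finset.mem_univ p) h
  -- Step 2: by Cayley–Hamilton, all powers give vectors in `S`.
  have hpow : ∀ k : ℕ, ∀ v : Fin m → ℝ, ((-A) ^ k * (-B)).mulVec v ∈ S := by
    intro k v
    let L : Matrix (Fin n) (Fin n) ℝ →ₗ[ℝ] (Fin n → ℝ) :=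
      { toFun := fun M => (M * (-B)).mulVec v
        map_add' := fun M N => by
          simp [Matrix.add_mul, Matrix.add_mulVec, Matrix.neg_mulVec, add_comm]
        map_smul' := fun c M => by
          simp [Matrix.smul_mul, Matrix.neg_mulVec, Matrix.smul_mulVec, smul_neg] }
    have hle : Submodule.span ℝ (Set.range fun p : Fin n => (-A) ^ (p : ℕ)) ≤ S.comap L := by
      rw [Submodule.span_le]
      rintro _ ⟨p, rfl⟩
      exact hcol p v
    exact hle (pow_mem_span_pow_fin (-A) k)
  -- Step 3: the integrand lies in `S` for every `τ`.
  have hS_closed : IsClosed (S : Set (Fin n → ℝ)) := Submodule.closed_of_finiteDimensional S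
  have hexp : ∀ τ : ℝ,
      (NormedSpace.exp (-((t₁ - τ) • A))).mulVec ((-B).mulVec (u τ)) ∈ S := by
    intro τ
    set w : Fin n → ℝ := (-B).mulVec (u τ) with hw
    have hMk : ∀ k : ℕ, (-((t₁ - τ) • A)) ^ k = (t₁ - τ) ^ k • (-A) ^ k := by
      intro k
      rw [show -((t₁ - τ) • A) = (t₁ - τ) • (-A) from (smul_neg _ _).symm, smul_pow]
    let Φ : Matrix (Fin n) (Fin n) ℝ →L[ℝ] (Fin n → ℝ) :=
      LinearMap.toContinuousLinearMap
        { toFun := fun M => M.mulVec w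
          map_add' := fun M N => by simp [Matrix.add_mulVec]
          map_smul' := fun c M => by simp [Matrix.smul_mulVec] }
    have hsum : Summable fun k : ℕ => ((k.factorial : ℝ)⁻¹) • (-((t₁ - τ) • A)) ^ k :=
      NormedSpace.expSeries_summable' _
    have hgoal : (NormedSpace.exp (-((t₁ - τ) • A))).mulVec w
        = Φ (∑' k : ℕ, ((k.factorial : ℝ)⁻¹) • (-((t₁ - τ) • A)) ^ k) := by
      rw [NormedSpace.exp_eq_tsum (𝕂 := ℝ)]
      rfl
    rw [hgoal]
    have hhs : HasSum (fun k : ℕ => Φ (((k.factorial : ℝ)⁻¹) • (-((t₁ - τ) • A)) ^ k))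
        (Φ (∑' k : ℕ, ((k.factorial : ℝ)⁻¹) • (-((t₁ - τ) • A)) ^ k)) :=
      hsum.hasSum.mapL Φ
    refine hS_closed.mem_of_tendsto hhs (Filter.Eventually.of_forall fun s =>
      Submodule.sum_mem _ fun k _ => ?_)
    have hterm : Φ (((k.factorial : ℝ)⁻¹) • (-((t₁ - τ) • A)) ^ k)
        = ((k.factorial : ℝ)⁻¹) • ((t₁ - τ) ^ k • ((-A) ^ k * (-B)).mulVec (u τ)) := by
      show (((k.factorial : ℝ)⁻¹) • (-((t₁ - τ) • A)) ^ k).mulVec w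
          = ((k.factorial : ℝ)⁻¹) • ((t₁ - τ) ^ k • ((-A) ^ k * (-B)).mulVec (u τ))
      rw [hMk k, Matrix.smul_mulVec, Matrix.smul_mulVec, hw,
        Matrix.mulVec_mulVec]
    rw [hterm]
    exact S.smul_mem _ (S.smul_mem _ (hpow k (u τ)))
  -- Step 4: the integral of an `S`-valued function lies in `S`.
  set f : ℝ → (Fin n → ℝ) := fun τ =>
    (NormedSpace.exp (-((t₁ - τ) • A))).mulVec ((-B).mulVec (u τ)) with hf
  have hf_cont : ContinuousOn f (Set.Icc 0 t₁) := by
    have hΨ : Continuous fun q : Matrix (Fin n) (Fin n) ℝ × (Fin m → ℝ) =>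
        q.1.mulVec ((-B).mulVec q.2) :=
      continuous_fst.matrix_mulVec (continuous_const.matrix_mulVec continuous_snd)
    have h1 : Continuous fun τ : ℝ => NormedSpace.exp (-((t₁ - τ) • A)) := by
      letI : NormedAlgebra ℚ (Matrix (Fin n) (Fin n) ℝ) := NormedAlgebra.restrictScalars ℚ ℝ _
      refine NormedSpace.exp_continuous.comp ?_
      exact ((continuous_const.sub continuous_id).smul continuous_const).neg
    exact hΨ.comp_continuousOn (h1.continuousOn.prodMk hu)
  have hf_int : IntervalIntegrable f MeasureTheory.volume 0 t₁ := by
    apply ContinuousOn.intervalIntegrable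
    rwa [Set.uIcc_of_le ht₁.le]
  -- Use the quotient by `S`, identified with a Euclidean space.
  let Q := (Fin n → ℝ) ⧸ S
  let bQ := Module.finBasis ℝ Q
  let ℓ : (Fin n → ℝ) →ₗ[ℝ] (Fin (Module.finrank ℝ Q) → ℝ) :=
    (bQ.equivFun.toLinearMap).comp S.mkQ
  let L : (Fin n → ℝ) →L[ℝ] (Fin (Module.finrank ℝ Q) → ℝ) :=
    LinearMap.toContinuousLinearMap ℓ
  have hker : ∀ x ∈ S, L x = 0 := by
    intro x hx
    have h1 : S.mkQ x = 0 := (Submodule.Quotient.mk_eq_zero S).2 hx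
    show bQ.equivFun (S.mkQ x) = 0
    rw [h1, map_zero]
  have hLint : L (∫ τ in (0 : ℝ)..t₁, f τ) = 0 := by
    rw [← L.intervalIntegral_comp_comm hf_int]
    have : (fun τ => L (f τ)) = fun _ => (0 : Fin (Module.finrank ℝ Q) → ℝ) :=
      funext fun τ => hker _ (hexp τ)
    rw [this, intervalIntegral.integral_zero]
  have hmk : S.mkQ (∫ τ in (0 : ℝ)..t₁, f τ) = 0 := by
    have h2 : bQ.equivFun (S.mkQ (∫ τ in (0 : ℝ)..t₁, f τ)) = 0 := hLint
    exact bQ.equivFun.map_eq_zero_iff.mp h2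
  exact (Submodule.Quotient.mk_eq_zero S).1 hmk
end
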